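/- arXiv:1405.1754 — 8 statements merged into one kernel-verified Lean document; each statement's English description precedes it below -/
import Mathlib

section
/- Let κ > 0, μ ≥ 0 and r ≥ 0. The output covariance matrix κ·V(r) + μ·I₄ of the two-mode squeezed vacuum under the symmetric channel Φ(κ,μ)⊗Φ(κ,μ) satisfies Simon's separability criterion — i.e. the complex Hermitian matrix Λ(κV(r)+μI₄)Λ − (i/2)Δ is positive semidefinite — if and only if μ ≥ (1/2)(1 − κ·e^{−2r}). -/
open Matrix ComplexOrder

/-- Covariance matrix of the two-mode squeezed vacuum with squeezing parameter `r`. -/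
noncomputable def Vtms (r : ℝ) : Matrix (Fin 4) (Fin 4) ℝ :=
  (1/2 : ℝ) • !![Real.cosh (2*r), 0, Real.sinh (2*r), 0;
                 0, Real.cosh (2*r), 0, -Real.sinh (2*r);
                 Real.sinh (2*r), 0, Real.cosh (2*r), 0;
                 0, -Real.sinh (2*r), 0, Real.cosh (2*r)]

/-- The 4×4 symplectic form, block diagonal with blocks [[0,-1],[1,0]]. -/
def Δ4 : Matrix (Fin 4) (Fin 4) ℝ :=
  !![0,-1,0,0; 1,0,0,0; 0,0,0,-1; 0,0,1,0]

/-- Partial transposition of the second mode on covariance matrices. -/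
def Λ4 : Matrix (Fin 4) (Fin 4) ℝ :=
  !![1,0,0,0; 0,1,0,0; 0,0,1,0; 0,0,0,-1]

/-- The complex Hermitian matrix `V - (i/2)Δ` built from a real 4×4 matrix `V`. -/
noncomputable def simonMatrix (V : Matrix (Fin 4) (Fin 4) ℝ) : Matrix (Fin 4) (Fin 4) ℂ :=
  V.map (fun x => (x : ℂ)) - (Complex.I / 2) • Δ4.map (fun x => (x : ℂ))

/-!
After partial transposition, `κ V(r) + μ I` becomes `a • 1 + b • S` with `S` the exchange of the
two modes, `a = κ cosh 2r / 2 + μ` and `b = κ sinh 2r / 2`. The matrices `S` and `Δ` commute, and a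
fixed unitary diagonalises the Simon matrix of `a • 1 + b • S` with eigenvalues `a ± b ± 1/2`, so it
is positive semidefinite iff `|b| + 1/2 ≤ a`. Since `cosh 2r - sinh 2r = exp (-2r)`, this is the
threshold `μ ≥ (1 - κ e^{-2r}) / 2`.
-/

def modeSwap : Matrix (Fin 4) (Fin 4) ℝ :=
  !![0, 0, 1, 0; 0, 0, 0, 1; 1, 0, 0, 0; 0, 1, 0, 0]

lemma Λ4_mul_Λ4 : Λ4 * Λ4 = 1 := by
  ext i j
  fin_cases i <;> fin_cases j <;> simp [Λ4, mul_apply, Fin.sum_univ_four]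

lemma Λ4_mul_Vtms_mul_Λ4 (r : ℝ) :
    Λ4 * Vtms r * Λ4 = (Real.cosh (2*r) / 2) • 1 + (Real.sinh (2*r) / 2) • modeSwap := by
  ext i j
  fin_cases i <;> fin_cases j <;>
    simp [Λ4, Vtms, modeSwap, mul_apply, Fin.sum_univ_four] <;> ring

lemma Λ4_mul_channel_mul_Λ4 (κ μ r : ℝ) :
    Λ4 * (κ • Vtms r + μ • (1 : Matrix (Fin 4) (Fin 4) ℝ)) * Λ4 =
      (κ * Real.cosh (2*r) / 2 + μ) • 1 + (κ * Real.sinh (2*r) / 2) • modeSwap := by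
  rw [mul_add, add_mul, mul_smul_comm, smul_mul_assoc, Λ4_mul_Vtms_mul_Λ4, mul_smul_comm,
    smul_mul_assoc, mul_one, Λ4_mul_Λ4]
  module

/-- A unitary whose columns are common eigenvectors of `modeSwap` and `Δ4`. -/
noncomputable def simonEigenbasis : Matrix (Fin 4) (Fin 4) ℂ :=
  (1/2 : ℂ) • !![1, 1, 1, 1;
                 Complex.I, -Complex.I, Complex.I, -Complex.I;
                 1, 1, -1, -1;
                 Complex.I, -Complex.I, -Complex.I, Complex.I]

lemma star_simonEigenbasis_mul_self : star simonEigenbasis * simonEigenbasis = 1 := by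
  ext i j
  fin_cases i <;> fin_cases j <;>
    simp [simonEigenbasis, mul_apply, Fin.sum_univ_four, star_apply, map_ofNat] <;>
    ring_nf <;> simp [Complex.I_sq] <;> ring

lemma isUnit_simonEigenbasis : IsUnit simonEigenbasis :=
  .of_mul_eq_one_right _ star_simonEigenbasis_mul_self

lemma star_simonEigenbasis_mul_simonMatrix_mul (a b : ℝ) :
    star simonEigenbasis * simonMatrix (a • 1 + b • modeSwap) * simonEigenbasis =
      diagonal (fun k => ((![a + b - 1/2, a + b + 1/2, a - b - 1/2, a - b + 1/2] k : ℝ) : ℂ)) := by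
  ext i j
  fin_cases i <;> fin_cases j <;>
    simp [simonEigenbasis, simonMatrix, modeSwap, Δ4, mul_apply, Fin.sum_univ_four, star_apply,
      one_apply, map_ofNat] <;>
    ring_nf <;> simp [Complex.I_sq] <;> ring

lemma simonMatrix_smul_one_add_smul_modeSwap_posSemidef_iff (a b : ℝ) :
    (simonMatrix (a • 1 + b • modeSwap)).PosSemidef ↔ |b| + 1/2 ≤ a := by
  rw [← isUnit_simonEigenbasis.posSemidef_star_left_conjugate_iff,
    star_simonEigenbasis_mul_simonMatrix_mul, posSemidef_diagonal_iff]
  simp only [Fin.forall_fin_succ, Complex.zero_le_real, cons_val_zero, cons_val_succ,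
    cons_val_fin_one, sub_nonneg, forall_const]
  rw [← le_sub_iff_add_le, abs_le]
  constructor
  · rintro ⟨h₁, -, h₂, -⟩
    constructor <;> linarith
  · rintro ⟨h₁, h₂⟩
    refine ⟨?_, ?_, ?_, ?_⟩ <;> linarith

theorem simon_criterion_symmetric_channel_general (κ μ r : ℝ) (hκ : 0 < κ)
    (hr : 0 ≤ r) :
    (simonMatrix (Λ4 * (κ • Vtms r + μ • (1 : Matrix (Fin 4) (Fin 4) ℝ)) * Λ4)).PosSemidef ↔
      μ ≥ (1/2) * (1 - κ * Real.exp (-2*r)) := by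
  have hsinh : 0 ≤ κ * Real.sinh (2*r) / 2 := by positivity
  have hexp : κ * Real.cosh (2*r) - κ * Real.sinh (2*r) = κ * Real.exp (-2*r) := by
    rw [← mul_sub, Real.cosh_sub_sinh, neg_mul]
  rw [Λ4_mul_channel_mul_Λ4, simonMatrix_smul_one_add_smul_modeSwap_posSemidef_iff,
    abs_of_nonneg hsinh, ge_iff_le]
  constructor <;> intro h <;> linarith

theorem simon_criterion_symmetric_channel (κ μ r : ℝ) (hκ : 0 < κ) (hμ : 0 ≤ μ)
    (hr : 0 ≤ r) :
    (simonMatrix (Λ4 * (κ • Vtms r + μ • (1 : Matrix (Fin 4) (Fin 4) ℝ)) * Λ4)).PosSemidef ↔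
      μ ≥ (1/2) * (1 - κ * Real.exp (-2*r)) :=
  simon_criterion_symmetric_channel_general κ μ r hκ hr
end

section
/- For every κ > 0 and every μ with 0 ≤ μ < 1/2, there exists r > 0 such that the complex Hermitian matrix Λ(κ·V(r) + μ·I₄)Λ − (i/2)Δ is not positive semidefinite. (This is the covariance-matrix form of the necessity direction of Proposition 1: if the total noise μ < 1/2, the channel Φ(κ,μ)⊗Φ(κ,μ) preserves the entanglement of a sufficiently squeezed two-mode squeezed vacuum state.) -/
open Matrix ComplexOrder

/-! After partial transposition, the noisy two-mode squeezed vacuum has covariance matrix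
`[[a•I, b•I], [b•I, a•I]]` with `a - b = κ e^{-2r}/2 + μ`. The vector `(1, i, -1, -i)` is an
eigenvector of its Simon matrix with eigenvalue `a - b - 1/2`, which is negative for large `r`
as soon as `μ < 1/2`. -/

theorem Matrix.not_posSemidef_of_mulVec_eq_smul {n : Type*} [Fintype n] {A : Matrix n n ℂ}
    {w : n → ℂ} (hw : w ≠ 0) {c : ℝ} (hc : c < 0) (hAw : A *ᵥ w = (c : ℂ) • w) :
    ¬ A.PosSemidef := fun hA => by
  have hpos : 0 < star w ⬝ᵥ w := dotProduct_star_self_pos_iff.mpr hw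
  have hneg : star w ⬝ᵥ (A *ᵥ w) < 0 := by
    rw [hAw, dotProduct_smul, smul_eq_mul]
    exact mul_neg_of_neg_of_pos (by exact_mod_cast hc) hpos
  exact (hA.dotProduct_mulVec_nonneg w).not_gt hneg

def symmetricBlock (a b : ℝ) : Matrix (Fin 4) (Fin 4) ℝ :=
  !![a, 0, b, 0; 0, a, 0, b; b, 0, a, 0; 0, b, 0, a]

/-- A common eigenvector of every `symmetricBlock a b` (eigenvalue `a - b`) and of `Δ4`
(eigenvalue `-i`). -/
def antiSqueezedVector : Fin 4 → ℂ := ![1, Complex.I, -1, -Complex.I]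

lemma antiSqueezedVector_ne_zero : antiSqueezedVector ≠ 0 :=
  fun h => one_ne_zero (congrFun h 0)

lemma simonMatrix_symmetricBlock_mulVec (a b : ℝ) :
    simonMatrix (symmetricBlock a b) *ᵥ antiSqueezedVector =
      ((a - b - 1 / 2 : ℝ) : ℂ) • antiSqueezedVector := by
  ext i
  fin_cases i <;>
    simp [simonMatrix, symmetricBlock, Δ4, antiSqueezedVector, mulVec, dotProduct,
      Fin.sum_univ_four] <;>
    ring_nf <;> simp only [Complex.I_sq] <;> ring

lemma Λ4_mul_noisy_Vtms_mul_Λ4 (κ μ r : ℝ) :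
    Λ4 * (κ • Vtms r + μ • 1) * Λ4 =
      symmetricBlock (κ * Real.cosh (2 * r) / 2 + μ) (κ * Real.sinh (2 * r) / 2) := by
  ext i j
  simp only [mul_apply, Fin.sum_univ_four]
  fin_cases i <;> fin_cases j <;> simp [Λ4, Vtms, symmetricBlock] <;> ring

open Filter Topology in
lemma exists_pos_mul_exp_neg_two_mul_lt (κ : ℝ) {ε : ℝ} (hε : 0 < ε) :
    ∃ r : ℝ, 0 < r ∧ κ * Real.exp (-(2 * r)) < ε := by
  have hlim : Tendsto (fun r : ℝ => κ * Real.exp (-(2 * r))) atTop (𝓝 0) := by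
    simpa using (Real.tendsto_exp_neg_atTop_nhds_zero.comp
      (tendsto_id.const_mul_atTop two_pos)).const_mul κ
  exact ((eventually_gt_atTop 0).and (hlim.eventually (gt_mem_nhds hε))).exists

theorem entanglement_preserved_low_noise_general (κ μ : ℝ)
    (hμ : μ < 1/2) :
    ∃ r : ℝ, 0 < r ∧
      ¬ (simonMatrix (Λ4 * (κ • Vtms r + μ • (1 : Matrix (Fin 4) (Fin 4) ℝ)) * Λ4)).PosSemidef := by
  obtain ⟨r, hr, hsmall⟩ := exists_pos_mul_exp_neg_two_mul_lt κ (ε := 1 - 2 * μ) (by linarith)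
  have hcs : κ * Real.cosh (2 * r) - κ * Real.sinh (2 * r) = κ * Real.exp (-(2 * r)) := by
    rw [← mul_sub, Real.cosh_sub_sinh]
  refine ⟨r, hr, ?_⟩
  rw [Λ4_mul_noisy_Vtms_mul_Λ4]
  exact not_posSemidef_of_mulVec_eq_smul antiSqueezedVector_ne_zero (by linarith)
    (simonMatrix_symmetricBlock_mulVec _ _)

theorem entanglement_preserved_low_noise (κ μ : ℝ) (hκ : 0 < κ) (hμ0 : 0 ≤ μ)
    (hμ : μ < 1/2) :
    ∃ r : ℝ, 0 < r ∧
      ¬ (simonMatrix (Λ4 * (κ • Vtms r + μ • (1 : Matrix (Fin 4) (Fin 4) ℝ)) * Λ4)).PosSemidef :=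
  entanglement_preserved_low_noise_general κ μ hμ
end

section
/- Let κ₁, κ₂ > 0 and μ₁, μ₂ ≥ 0 satisfy κ₁μ₂ + κ₂μ₁ < (κ₁+κ₂)/2. Then there exists r > 0 such that, with K = diag(√κ₁, √κ₁, √κ₂, √κ₂) and M = diag(μ₁, μ₁, μ₂, μ₂), the complex Hermitian matrix Λ(K·V(r)·Kᵀ + M)Λ − (i/2)Δ is not positive semidefinite. (This is the covariance-matrix form of the necessity direction of Corollary 3: if κ₁μ₂ + κ₂μ₁ < (κ₁+κ₂)/2, the channel Φ(κ₁,μ₁)⊗Φ(κ₂,μ₂) does not annihilate the entanglement of all two-mode gaussian states.) -/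
open Matrix ComplexOrder

/-!
After partial transposition the output `K V(r) Kᵀ + M` is still in Simon's standard form, with
`a = (κ₁ cosh 2r + 2μ₁)/2`, `b = (κ₂ cosh 2r + 2μ₂)/2`, `c = √(κ₁κ₂) sinh 2r / 2`. On the vectors
`(X, iX, -Y, -iY)` the Simon form reduces to the real binary form with matrix
`[[2a - 1, -2c], [-2c, 2b - 1]]`, whose determinant equals
`(2μ₁ - 1)(2μ₂ - 1) + κ₁κ₂ - (κ₁ + κ₂ - 2(κ₁μ₂ + κ₂μ₁)) cosh 2r`.
Under the hypothesis the coefficient of `cosh 2r` is negative, so for large squeezing the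
determinant is negative and the form is indefinite.
-/

open Real

/-- Simon's standard form with `c₊ = c`, `c₋ = -c`: the shape of the two-mode squeezed vacuum
and of its images under local gaussian channels. -/
def standardForm (a b c : ℝ) : Matrix (Fin 4) (Fin 4) ℝ :=
  !![a, 0, c, 0; 0, a, 0, -c; c, 0, b, 0; 0, -c, 0, b]

lemma Vtms_eq_standardForm (r : ℝ) :
    Vtms r = standardForm (cosh (2 * r) / 2) (cosh (2 * r) / 2) (sinh (2 * r) / 2) := by
  ext i j; fin_cases i <;> fin_cases j <;> simp [Vtms, standardForm] <;> ring

lemma diagonal_mul_standardForm_mul_transpose_add (a b c x y μ₁ μ₂ : ℝ) :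
    diagonal ![x, x, y, y] * standardForm a b c * (diagonal ![x, x, y, y])ᵀ
        + diagonal ![μ₁, μ₁, μ₂, μ₂] =
      standardForm (x ^ 2 * a + μ₁) (y ^ 2 * b + μ₂) (x * y * c) := by
  ext i j; fin_cases i <;> fin_cases j <;>
    simp [standardForm, Matrix.mul_apply, diagonal] <;> ring

lemma dotProduct_simonMatrix_partialTranspose_standardForm (a b c X Y : ℝ) :
    let v : Fin 4 → ℂ := ![X, Complex.I * X, -Y, -Complex.I * Y]
    star v ⬝ᵥ simonMatrix (Λ4 * standardForm a b c * Λ4) *ᵥ v =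
      (((2 * a - 1) * X ^ 2 + (2 * b - 1) * Y ^ 2 - 4 * c * X * Y : ℝ) : ℂ) := by
  intro v
  simp [v, simonMatrix, standardForm, Λ4, Δ4, Matrix.mulVec, dotProduct, Fin.sum_univ_four]
  ring_nf
  simp only [Complex.I_sq]
  ring

lemma not_posSemidef_simonMatrix_partialTranspose_standardForm {a b c : ℝ} (ha : 1 < 2 * a)
    (hdet : (2 * a - 1) * (2 * b - 1) < 4 * c ^ 2) :
    ¬ (simonMatrix (Λ4 * standardForm a b c * Λ4)).PosSemidef := by
  intro hpsd
  -- At `(X, Y) = (2c, 2a - 1)` the form equals `(2a - 1) ((2a - 1) (2b - 1) - 4c²)`.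
  have hquad := hpsd.dotProduct_mulVec_nonneg
    ![(2 * c : ℝ), Complex.I * (2 * c : ℝ), -(2 * a - 1 : ℝ), -Complex.I * (2 * a - 1 : ℝ)]
  rw [dotProduct_simonMatrix_partialTranspose_standardForm, Complex.zero_le_real] at hquad
  nlinarith

lemma exists_pos_lt_cosh_two_mul (T : ℝ) : ∃ r : ℝ, 0 < r ∧ T < cosh (2 * r) := by
  have hr : 0 < |T| + 1 := by positivity
  have hcosh : 2 * (|T| + 1) < cosh (2 * (|T| + 1)) :=
    (self_lt_sinh_iff.2 (by positivity)).trans (sinh_lt_cosh _)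
  refine ⟨|T| + 1, hr, ?_⟩
  linarith [le_abs_self T, abs_nonneg T]

theorem asymmetric_channel_not_annihilating_general (κ₁ κ₂ μ₁ μ₂ : ℝ) (hκ₁ : 0 < κ₁) (hκ₂ : 0 < κ₂)
    (h : κ₁ * μ₂ + κ₂ * μ₁ < (κ₁ + κ₂) / 2) :
    ∃ r : ℝ, 0 < r ∧
      ¬ (simonMatrix (Λ4 *
          (Matrix.diagonal ![Real.sqrt κ₁, Real.sqrt κ₁, Real.sqrt κ₂, Real.sqrt κ₂] * Vtms r *
              (Matrix.diagonal ![Real.sqrt κ₁, Real.sqrt κ₁, Real.sqrt κ₂, Real.sqrt κ₂])ᵀ +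
            Matrix.diagonal ![μ₁, μ₁, μ₂, μ₂]) * Λ4)).PosSemidef := by
  set ε := κ₁ + κ₂ - 2 * (κ₁ * μ₂ + κ₂ * μ₁)
  have hε : 0 < ε := by linarith
  obtain ⟨r, hr, hcosh⟩ := exists_pos_lt_cosh_two_mul
    (max (((2 * μ₁ - 1) * (2 * μ₂ - 1) + κ₁ * κ₂) / ε) ((1 - 2 * μ₁) / κ₁))
  rw [max_lt_iff, div_lt_iff₀ hε, div_lt_iff₀ hκ₁] at hcosh
  obtain ⟨hdet, hpos⟩ := hcosh
  refine ⟨r, hr, ?_⟩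
  rw [Vtms_eq_standardForm, diagonal_mul_standardForm_mul_transpose_add, sq_sqrt hκ₁.le,
    sq_sqrt hκ₂.le]
  apply not_posSemidef_simonMatrix_partialTranspose_standardForm
  · linarith
  · rw [mul_pow, mul_pow, sq_sqrt hκ₁.le, sq_sqrt hκ₂.le, div_pow, sinh_sq]
    linear_combination hdet

theorem asymmetric_channel_not_annihilating (κ₁ κ₂ μ₁ μ₂ : ℝ) (hκ₁ : 0 < κ₁) (hκ₂ : 0 < κ₂)
    (hμ₁ : 0 ≤ μ₁) (hμ₂ : 0 ≤ μ₂) (h : κ₁ * μ₂ + κ₂ * μ₁ < (κ₁ + κ₂) / 2) :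
    ∃ r : ℝ, 0 < r ∧
      ¬ (simonMatrix (Λ4 *
          (Matrix.diagonal ![Real.sqrt κ₁, Real.sqrt κ₁, Real.sqrt κ₂, Real.sqrt κ₂] * Vtms r *
              (Matrix.diagonal ![Real.sqrt κ₁, Real.sqrt κ₁, Real.sqrt κ₂, Real.sqrt κ₂])ᵀ +
            Matrix.diagonal ![μ₁, μ₁, μ₂, μ₂]) * Λ4)).PosSemidef :=
  asymmetric_channel_not_annihilating_general κ₁ κ₂ μ₁ μ₂ hκ₁ hκ₂ h
end

section
/- For every real r, the two-mode squeezed vacuum covariance matrix V(r) satisfies the uncertainty relation: the complex Hermitian matrix V(r) − (i/2)Δ is positive semidefinite. -/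
open Matrix ComplexOrder

/-! The two-mode squeezed vacuum is a symplectic image of the vacuum: `V(r) = ½ S Sᵀ` with
`S Δ Sᵀ = Δ` for the two-mode squeezing matrix `S`. Hence `V − (i/2)Δ = ½ S (1 − iΔ) Sᵀ`, and
`1 − iΔ` is positive semidefinite because `Δᵀ = −Δ` and `Δ² = −1` make it twice a Hermitian
projection. -/

section ComplexStructure

lemma conjTranspose_map_ofReal {m n : Type*} (A : Matrix m n ℝ) :
    (A.map (fun x => (x : ℂ)))ᴴ = Aᵀ.map (fun x => (x : ℂ)) := by
  ext i j; simp

variable {n : Type*} [Fintype n]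

lemma map_ofReal_mul (A B : Matrix n n ℝ) :
    (A * B).map (fun x => (x : ℂ)) = A.map (fun x => (x : ℂ)) * B.map (fun x => (x : ℂ)) :=
  Matrix.map_mul (f := Complex.ofRealHom)

variable [DecidableEq n] (J : Matrix n n ℝ)

lemma posSemidef_one_sub_I_smul_map (hJ : Jᵀ = -J) (hJJ : J * J = -1) :
    (1 - Complex.I • J.map (fun x => (x : ℂ))).PosSemidef := by
  set K := J.map (fun x => (x : ℂ))
  have hK : Kᴴ = -K := by
    rw [conjTranspose_map_ofReal, hJ]; ext i j; simp [K]
  have hKK : K * K = -1 := by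
    rw [← map_ofReal_mul, hJJ, Matrix.map_neg _ Complex.ofReal_neg,
      Matrix.map_one _ Complex.ofReal_zero Complex.ofReal_one]
  set P := 1 - Complex.I • K
  have hP : Pᴴ = P := by
    simp [P, conjTranspose_sub, conjTranspose_smul, hK]
  have hPP : Pᴴ * P = (2 : ℝ) • P := by
    rw [hP]
    simp only [P, sub_mul, mul_sub, one_mul, mul_one, smul_mul_smul_comm, hKK, Complex.I_mul_I]
    module
  have hP_eq : P = (1 / 2 : ℝ) • (Pᴴ * P) := by rw [hPP, smul_smul]; norm_num
  rw [hP_eq]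
  exact (posSemidef_conjTranspose_mul_self P).smul (by norm_num)

lemma posSemidef_map_mul_transpose_sub_I_smul_map (hJ : Jᵀ = -J) (hJJ : J * J = -1)
    (S : Matrix n n ℝ) (hS : S * J * Sᵀ = J) :
    ((S * Sᵀ).map (fun x => (x : ℂ)) - Complex.I • J.map (fun x => (x : ℂ))).PosSemidef := by
  have hcongr : (S * Sᵀ).map (fun x => (x : ℂ)) - Complex.I • J.map (fun x => (x : ℂ)) =
      S.map (fun x => (x : ℂ)) * (1 - Complex.I • J.map (fun x => (x : ℂ))) *
        (S.map (fun x => (x : ℂ)))ᴴ := by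
    rw [conjTranspose_map_ofReal, mul_sub, sub_mul, mul_one, mul_smul_comm, smul_mul_assoc,
      ← map_ofReal_mul, ← map_ofReal_mul, ← map_ofReal_mul, hS]
  rw [hcongr]
  exact (posSemidef_one_sub_I_smul_map J hJ hJJ).mul_mul_conjTranspose_same _

end ComplexStructure

lemma Δ4_transpose : Δ4ᵀ = -Δ4 := by
  ext i j; fin_cases i <;> fin_cases j <;> simp [Δ4]

lemma Δ4_mul_self : Δ4 * Δ4 = -1 := by
  ext i j; fin_cases i <;> fin_cases j <;> simp [Δ4, mul_apply, Fin.sum_univ_four]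

lemma simonMatrix_half_smul (M : Matrix (Fin 4) (Fin 4) ℝ) :
    simonMatrix ((1 / 2 : ℝ) • M) =
      (1 / 2 : ℝ) • (M.map (fun x => (x : ℂ)) - Complex.I • Δ4.map (fun x => (x : ℂ))) := by
  ext i j
  simp only [simonMatrix, Matrix.sub_apply, map_apply, Matrix.smul_apply, smul_eq_mul,
    Complex.ofReal_mul, Complex.real_smul, one_div, Complex.ofReal_inv, Complex.ofReal_ofNat]
  ring

noncomputable def twoModeSqueezer (r : ℝ) : Matrix (Fin 4) (Fin 4) ℝ :=
  !![Real.cosh r, 0, Real.sinh r, 0;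
     0, Real.cosh r, 0, -Real.sinh r;
     Real.sinh r, 0, Real.cosh r, 0;
     0, -Real.sinh r, 0, Real.cosh r]

lemma twoModeSqueezer_mul_Δ4_mul_transpose (r : ℝ) :
    twoModeSqueezer r * Δ4 * (twoModeSqueezer r)ᵀ = Δ4 := by
  have h := Real.cosh_sq_sub_sinh_sq r
  ext i j; fin_cases i <;> fin_cases j <;>
    simp [twoModeSqueezer, Δ4, mul_apply, Fin.sum_univ_four] <;> linarith

lemma Vtms_eq_half_smul_mul_transpose (r : ℝ) :
    Vtms r = (1 / 2 : ℝ) • (twoModeSqueezer r * (twoModeSqueezer r)ᵀ) := by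
  rw [Vtms, Real.cosh_two_mul, Real.sinh_two_mul]
  congr 1
  ext i j; fin_cases i <;> fin_cases j <;>
    simp [twoModeSqueezer, mul_apply, Fin.sum_univ_four] <;> ring

theorem tmsv_uncertainty_relation (r : ℝ) :
    (simonMatrix (Vtms r)).PosSemidef := by
  rw [Vtms_eq_half_smul_mul_transpose, simonMatrix_half_smul]
  exact (posSemidef_map_mul_transpose_sub_I_smul_map Δ4 Δ4_transpose Δ4_mul_self
    (twoModeSqueezer r) (twoModeSqueezer_mul_Δ4_mul_transpose r)).smul (by norm_num)
end

section
/- For every real r ≠ 0, the complex Hermitian matrix Λ·V(r)·Λ − (i/2)Δ is not positive semidefinite; that is, the two-mode squeezed vacuum state violates Simon's separability criterion (it is entangled) whenever the squeezing parameter r is nonzero. -/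
open Matrix ComplexOrder

/-! The Hermitian form of the partially transposed Simon matrix, evaluated at `(1, i, s, s i)`
with `s = ±1`, equals `2 (cosh 2r + s sinh 2r - 1)`; taking `s = -sign r` makes this
`2 (exp (-2|r|) - 1) < 0`. -/

open Complex in
lemma star_dotProduct_simonMatrix_Λ4_Vtms_mulVec (r ε : ℝ) :
    star ![1, I, (ε : ℂ), ε * I] ⬝ᵥ simonMatrix (Λ4 * Vtms r * Λ4) *ᵥ ![1, I, (ε : ℂ), ε * I] =
      ((Real.cosh (2 * r) - 1) * (1 + ε ^ 2) + 2 * ε * Real.sinh (2 * r) : ℝ) := by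
  simp [simonMatrix, Vtms, Δ4, Λ4, mulVec, dotProduct, Fin.sum_univ_four, Complex.ext_iff,
    ← ofReal_ofNat, ← ofReal_mul]
  ring

lemma Real.exists_sq_eq_one_cosh_add_mul_sinh_lt_one {x : ℝ} (hx : x ≠ 0) :
    ∃ s : ℝ, s ^ 2 = 1 ∧ Real.cosh x + s * Real.sinh x < 1 := by
  rcases hx.lt_or_gt with hneg | hpos
  · exact ⟨1, one_pow 2, by rwa [one_mul, Real.cosh_add_sinh, Real.exp_lt_one_iff]⟩
  · refine ⟨-1, by norm_num, ?_⟩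
    rw [neg_one_mul, ← sub_eq_add_neg, Real.cosh_sub_sinh, Real.exp_lt_one_iff]
    exact neg_neg_of_pos hpos

theorem tmsv_entangled_of_ne_zero (r : ℝ) (hr : r ≠ 0) :
    ¬ (simonMatrix (Λ4 * Vtms r * Λ4)).PosSemidef := by
  intro hpsd
  obtain ⟨s, hs, hlt⟩ :=
    Real.exists_sq_eq_one_cosh_add_mul_sinh_lt_one (mul_ne_zero two_ne_zero hr)
  have hnonneg := hpsd.dotProduct_mulVec_nonneg ![1, Complex.I, (s : ℂ), s * Complex.I]
  rw [star_dotProduct_simonMatrix_Λ4_Vtms_mulVec, Complex.zero_le_real, hs] at hnonneg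
  linarith
end

section
/- Let η₁, η₂ ∈ (0,1], τ₁, τ₂ ∈ [1,∞), and set λ₀ = 1 − √((τ₁−1)(τ₂−1)/(τ₁τ₂)). If 2 − η₁ − τ₂(2−η₁−η₂) > 0 and 2 − η₂ − τ₁(2−η₁−η₂) > 0, then there exists a real λ with λ < λ₀ satisfying 2·[τ₁τ₂(1−λ)² − (τ₁−1)(τ₂−1) − √(η₁τ₁η₂τ₂)·(1−λ)] < η₁τ₁ + η₂τ₂ − λ(2−λ)·τ₁τ₂·(η₁+η₂). (This is the key analytic claim in the proof of Proposition 2 guaranteeing that the witness expectation value becomes negative, certifying entanglement of the output state.) -/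
set_option maxHeartbeats 1000000 in
/-- Existence of a witness parameter `λ < λ₀` making the witness expectation negative
(key analytic claim in the proof of Proposition 2). -/
theorem exists_witness_parameter (η₁ η₂ τ₁ τ₂ : ℝ)
    (hη₁ : η₁ ∈ Set.Ioc (0 : ℝ) 1) (hη₂ : η₂ ∈ Set.Ioc (0 : ℝ) 1)
    (hτ₁ : 1 ≤ τ₁) (hτ₂ : 1 ≤ τ₂)
    (h1 : 0 < 2 - η₁ - τ₂ * (2 - η₁ - η₂))
    (h2 : 0 < 2 - η₂ - τ₁ * (2 - η₁ - η₂)) :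
    ∃ lam : ℝ, lam < 1 - Real.sqrt ((τ₁ - 1) * (τ₂ - 1) / (τ₁ * τ₂)) ∧
      2 * (τ₁ * τ₂ * (1 - lam) ^ 2 - (τ₁ - 1) * (τ₂ - 1) -
          Real.sqrt (η₁ * τ₁ * η₂ * τ₂) * (1 - lam)) <
        η₁ * τ₁ + η₂ * τ₂ - lam * (2 - lam) * τ₁ * τ₂ * (η₁ + η₂) := by
  obtain ⟨hη₁0, hη₁1⟩ := hη₁
  obtain ⟨hη₂0, hη₂1⟩ := hη₂
  have hτ₁0 : (0:ℝ) < τ₁ := lt_of_lt_of_le one_pos hτ₁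
  have hτ₂0 : (0:ℝ) < τ₂ := lt_of_lt_of_le one_pos hτ₂
  have hτ12 : (0:ℝ) < τ₁ * τ₂ := mul_pos hτ₁0 hτ₂0
  have hg0 : 0 ≤ 2 - η₁ - η₂ := by linarith
  rcases eq_or_lt_of_le hg0 with hgz | hgpos
  · -- 2 - η₁ - η₂ = 0, i.e. η₁ = η₂ = 1
    have he1 : η₁ = 1 := by linarith
    have he2 : η₂ = 1 := by linarith
    subst he1; subst he2
    refine ⟨1 - (τ₁ + τ₂), ?_, ?_⟩
    · have hs1 : Real.sqrt ((τ₁ - 1) * (τ₂ - 1) / (τ₁ * τ₂)) ≤ 1 := by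
        have h := Real.sqrt_le_sqrt (show (τ₁ - 1) * (τ₂ - 1) / (τ₁ * τ₂) ≤ 1 by
          rw [div_le_one hτ12]; nlinarith)
        rwa [Real.sqrt_one] at h
      linarith
    · have ht : 1 ≤ Real.sqrt (1 * τ₁ * 1 * τ₂) := by
        have h := Real.sqrt_le_sqrt (show (1:ℝ) ≤ 1 * τ₁ * 1 * τ₂ by nlinarith)
        rwa [Real.sqrt_one] at h
      have hpos : (0:ℝ) < τ₁ + τ₂ := by linarith
      have hkey : 1 * (τ₁ + τ₂) ≤ Real.sqrt (1 * τ₁ * 1 * τ₂) * (τ₁ + τ₂) :=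
        mul_le_mul_of_nonneg_right ht (le_of_lt hpos)
      nlinarith [hkey]
  · -- 2 - η₁ - η₂ > 0
    set t : ℝ := Real.sqrt (η₁ * τ₁ * η₂ * τ₂) with htdef
    have hABpos : (0:ℝ) < η₁ * τ₁ * η₂ * τ₂ := by positivity
    have ht2 : t ^ 2 = η₁ * τ₁ * η₂ * τ₂ := Real.sq_sqrt (le_of_lt hABpos)
    have htpos : 0 < t := Real.sqrt_pos.mpr hABpos
    have hcpos : 0 < τ₁ * τ₂ * (2 - η₁ - η₂) := mul_pos hτ12 hgpos
    have hcne : τ₁ * τ₂ * (2 - η₁ - η₂) ≠ 0 := ne_of_gt hcpos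
    refine ⟨1 - t / (τ₁ * τ₂ * (2 - η₁ - η₂)), ?_, ?_⟩
    · -- sqrt ((τ₁-1)(τ₂-1)/(τ₁τ₂)) < t / c
      have htc : 0 < t / (τ₁ * τ₂ * (2 - η₁ - η₂)) := div_pos htpos hcpos
      have hlt : (τ₁ - 1) * (τ₂ - 1) / (τ₁ * τ₂)
          < (t / (τ₁ * τ₂ * (2 - η₁ - η₂))) ^ 2 := by
        rw [div_pow, ht2, div_lt_div_iff₀ hτ12 (by positivity)]
        have k1 : 0 < η₂ - (τ₂ - 1) * (2 - η₁ - η₂) := by nlinarith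
        have k2 : 0 < η₁ - (τ₁ - 1) * (2 - η₁ - η₂) := by nlinarith
        have h3 : 0 ≤ (τ₁ - 1) * (2 - η₁ - η₂) := by nlinarith
        have h4 : 0 ≤ (τ₂ - 1) * (2 - η₁ - η₂) := by nlinarith
        have hmid : (τ₁ - 1) * (2 - η₁ - η₂) * ((τ₂ - 1) * (2 - η₁ - η₂)) < η₁ * η₂ := by
          nlinarith [mul_pos hη₁0 k1, mul_nonneg (le_of_lt k2) h4]
        nlinarith [mul_lt_mul_of_pos_right hmid (show (0:ℝ) < (τ₁*τ₂)^2 by positivity)]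
      have h := (Real.sqrt_lt' htc).mpr hlt
      linarith
    · -- main inequality
      have key : (τ₁ * τ₂ * (2 - η₁ - η₂)) *
          (τ₁ * τ₂ * (η₁ + η₂) - 2 * (τ₁ - 1) * (τ₂ - 1) - η₁ * τ₁ - η₂ * τ₂)
          < t ^ 2 := by
        rw [ht2]
        nlinarith [mul_pos (mul_pos hτ12 h1) h2]
      have hμt : (τ₁ * τ₂ * (2 - η₁ - η₂)) * (t / (τ₁ * τ₂ * (2 - η₁ - η₂))) = t :=
        mul_div_cancel₀ t hcne
      have hcf : (τ₁ * τ₂ * (2 - η₁ - η₂)) *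
          ((τ₁ * τ₂ * (2 - η₁ - η₂)) * (t / (τ₁ * τ₂ * (2 - η₁ - η₂))) ^ 2
            - 2 * t * (t / (τ₁ * τ₂ * (2 - η₁ - η₂)))
            + (τ₁ * τ₂ * (η₁ + η₂) - 2 * (τ₁ - 1) * (τ₂ - 1) - η₁ * τ₁ - η₂ * τ₂))
          = (τ₁ * τ₂ * (2 - η₁ - η₂)) *
              (τ₁ * τ₂ * (η₁ + η₂) - 2 * (τ₁ - 1) * (τ₂ - 1) - η₁ * τ₁ - η₂ * τ₂)
            - t ^ 2 := by
        calc (τ₁ * τ₂ * (2 - η₁ - η₂)) *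
          ((τ₁ * τ₂ * (2 - η₁ - η₂)) * (t / (τ₁ * τ₂ * (2 - η₁ - η₂))) ^ 2
            - 2 * t * (t / (τ₁ * τ₂ * (2 - η₁ - η₂)))
            + (τ₁ * τ₂ * (η₁ + η₂) - 2 * (τ₁ - 1) * (τ₂ - 1) - η₁ * τ₁ - η₂ * τ₂))
            = ((τ₁ * τ₂ * (2 - η₁ - η₂)) * (t / (τ₁ * τ₂ * (2 - η₁ - η₂)))) *
                ((τ₁ * τ₂ * (2 - η₁ - η₂)) * (t / (τ₁ * τ₂ * (2 - η₁ - η₂))))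
              - 2 * t * ((τ₁ * τ₂ * (2 - η₁ - η₂)) * (t / (τ₁ * τ₂ * (2 - η₁ - η₂))))
              + (τ₁ * τ₂ * (2 - η₁ - η₂)) *
                (τ₁ * τ₂ * (η₁ + η₂) - 2 * (τ₁ - 1) * (τ₂ - 1) - η₁ * τ₁ - η₂ * τ₂) := by
              ring
        _ = _ := by rw [hμt]; ring
      have hquad : (τ₁ * τ₂ * (2 - η₁ - η₂)) * (t / (τ₁ * τ₂ * (2 - η₁ - η₂))) ^ 2
            - 2 * t * (t / (τ₁ * τ₂ * (2 - η₁ - η₂)))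
            + (τ₁ * τ₂ * (η₁ + η₂) - 2 * (τ₁ - 1) * (τ₂ - 1) - η₁ * τ₁ - η₂ * τ₂) < 0 := by
        have hneg : (τ₁ * τ₂ * (2 - η₁ - η₂)) *
            ((τ₁ * τ₂ * (2 - η₁ - η₂)) * (t / (τ₁ * τ₂ * (2 - η₁ - η₂))) ^ 2
              - 2 * t * (t / (τ₁ * τ₂ * (2 - η₁ - η₂)))
              + (τ₁ * τ₂ * (η₁ + η₂) - 2 * (τ₁ - 1) * (τ₂ - 1) - η₁ * τ₁ - η₂ * τ₂)) < 0 := by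
          rw [hcf]; linarith
        by_contra hcon
        push_neg at hcon
        nlinarith [mul_nonneg (le_of_lt hcpos) hcon]
      have hexp : 2 * (τ₁ * τ₂ * (1 - (1 - t / (τ₁ * τ₂ * (2 - η₁ - η₂)))) ^ 2
            - (τ₁ - 1) * (τ₂ - 1)
            - t * (1 - (1 - t / (τ₁ * τ₂ * (2 - η₁ - η₂)))))
          - (η₁ * τ₁ + η₂ * τ₂ - (1 - t / (τ₁ * τ₂ * (2 - η₁ - η₂)))
              * (2 - (1 - t / (τ₁ * τ₂ * (2 - η₁ - η₂)))) * τ₁ * τ₂ * (η₁ + η₂))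
          = (τ₁ * τ₂ * (2 - η₁ - η₂)) * (t / (τ₁ * τ₂ * (2 - η₁ - η₂))) ^ 2
            - 2 * t * (t / (τ₁ * τ₂ * (2 - η₁ - η₂)))
            + (τ₁ * τ₂ * (η₁ + η₂) - 2 * (τ₁ - 1) * (τ₂ - 1) - η₁ * τ₁ - η₂ * τ₂) := by
        ring
      linarith [hquad, hexp]
end

section
/- Let 0 < κ₁ < 1, κ₂ ≥ 1 and a₁, a₂ ≥ 0, and set τ₁ = 1 + a₁, η₁ = κ₁/τ₁, τ₂ = κ₂ + a₂, η₂ = κ₂/τ₂. Then the conjunction of the two inequalities 2 − η₁ − τ₂(2−η₁−η₂) > 0 and 2 − η₂ − τ₁(2−η₁−η₂) > 0 is equivalent to the conjunction a₁ < κ₁(κ₂+a₂)/(κ₂+2a₂) and a₂ < 1 − κ₂(1+a₁−κ₁)/(2(1+a₁)−κ₁). (This is the algebraic reduction giving case (ii) of Proposition 2: under these conditions the channel Φ(κ₁,μ₁)⊗Φ(κ₂,μ₂), an attenuator tensored with an amplifier, is not entanglement annihilating.) -/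
/-!
Clearing the positive denominator `τ₁ = 1 + a₁` turns the first inequality into
`(1 - a₂)(2τ₁ - κ₁) - κ₂(τ₁ - κ₁) > 0`, and clearing `τ₂ = κ₂ + a₂` turns the second into
`κ₁(κ₂ + a₂) - a₁(κ₂ + 2a₂) > 0`. Both are linear in the noise parameter being bounded,
with positive coefficient `2τ₁ - κ₁`, resp. `κ₂ + 2a₂`, so dividing by it gives the bounds.
-/

lemma attenuator_amplifier_first_condition_iff {κ₁ κ₂ a₁ a₂ : ℝ} (h₁ : 0 < 1 + a₁)
    (h₂ : κ₂ + a₂ ≠ 0) (hd : 0 < 2 * (1 + a₁) - κ₁) :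
    0 < 2 - κ₁ / (1 + a₁) - (κ₂ + a₂) * (2 - κ₁ / (1 + a₁) - κ₂ / (κ₂ + a₂)) ↔
      a₂ < 1 - κ₂ * (1 + a₁ - κ₁) / (2 * (1 + a₁) - κ₁) := by
  have e : 2 - κ₁ / (1 + a₁) - (κ₂ + a₂) * (2 - κ₁ / (1 + a₁) - κ₂ / (κ₂ + a₂)) =
      ((1 - a₂) * (2 * (1 + a₁) - κ₁) - κ₂ * (1 + a₁ - κ₁)) / (1 + a₁) := by
    field_simp
    ring
  rw [e, div_pos_iff_of_pos_right h₁, sub_pos, lt_sub_comm, div_lt_iff₀ hd]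

lemma attenuator_amplifier_second_condition_iff {κ₁ κ₂ a₁ a₂ : ℝ} (h₁ : 1 + a₁ ≠ 0)
    (h₂ : 0 < κ₂ + a₂) (hd : 0 < κ₂ + 2 * a₂) :
    0 < 2 - κ₂ / (κ₂ + a₂) - (1 + a₁) * (2 - κ₁ / (1 + a₁) - κ₂ / (κ₂ + a₂)) ↔
      a₁ < κ₁ * (κ₂ + a₂) / (κ₂ + 2 * a₂) := by
  have e : 2 - κ₂ / (κ₂ + a₂) - (1 + a₁) * (2 - κ₁ / (1 + a₁) - κ₂ / (κ₂ + a₂)) =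
      (κ₁ * (κ₂ + a₂) - a₁ * (κ₂ + 2 * a₂)) / (κ₂ + a₂) := by
    field_simp
    ring
  rw [e, div_pos_iff_of_pos_right h₂, lt_div_iff₀ hd, sub_pos]

theorem prop2_case_ii_general (κ₁ κ₂ a₁ a₂ : ℝ)
    (hκ₁' : κ₁ < 1) (hκ₂ : 1 ≤ κ₂)
    (ha₁ : 0 ≤ a₁) (ha₂ : 0 ≤ a₂) :
    (0 < 2 - κ₁ / (1 + a₁) - (κ₂ + a₂) * (2 - κ₁ / (1 + a₁) - κ₂ / (κ₂ + a₂)) ∧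
     0 < 2 - κ₂ / (κ₂ + a₂) - (1 + a₁) * (2 - κ₁ / (1 + a₁) - κ₂ / (κ₂ + a₂))) ↔
    (a₁ < κ₁ * (κ₂ + a₂) / (κ₂ + 2 * a₂) ∧
     a₂ < 1 - κ₂ * (1 + a₁ - κ₁) / (2 * (1 + a₁) - κ₁)) := by
  have hτ₁ : 0 < 1 + a₁ := by linarith
  have hτ₂ : 0 < κ₂ + a₂ := by linarith
  rw [attenuator_amplifier_first_condition_iff hτ₁ hτ₂.ne' (by linarith),
    attenuator_amplifier_second_condition_iff hτ₁.ne' hτ₂ (by linarith), and_comm]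

/-- Case (ii) of Proposition 2 (attenuator ⊗ amplifier): algebraic reduction of the
entanglement-preservation conditions. -/
theorem prop2_case_ii (κ₁ κ₂ a₁ a₂ : ℝ)
    (hκ₁ : 0 < κ₁) (hκ₁' : κ₁ < 1) (hκ₂ : 1 ≤ κ₂)
    (ha₁ : 0 ≤ a₁) (ha₂ : 0 ≤ a₂) :
    (0 < 2 - κ₁ / (1 + a₁) - (κ₂ + a₂) * (2 - κ₁ / (1 + a₁) - κ₂ / (κ₂ + a₂)) ∧
     0 < 2 - κ₂ / (κ₂ + a₂) - (1 + a₁) * (2 - κ₁ / (1 + a₁) - κ₂ / (κ₂ + a₂))) ↔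
    (a₁ < κ₁ * (κ₂ + a₂) / (κ₂ + 2 * a₂) ∧
     a₂ < 1 - κ₂ * (1 + a₁ - κ₁) / (2 * (1 + a₁) - κ₁)) :=
  prop2_case_ii_general κ₁ κ₂ a₁ a₂ hκ₁' hκ₂ ha₁ ha₂
end

section
/- Let κ₁ ≥ 1, κ₂ ≥ 1 and a₁, a₂ ≥ 0, and set τᵢ = κᵢ + aᵢ, ηᵢ = κᵢ/τᵢ (i = 1,2). Then the conjunction of the two inequalities 2 − η₁ − τ₂(2−η₁−η₂) > 0 and 2 − η₂ − τ₁(2−η₁−η₂) > 0 is equivalent to the conjunction a₁ < 1 − κ₁a₂/(κ₂+2a₂) and a₂ < 1 − κ₂a₁/(κ₁+2a₁). (This is the algebraic reduction giving case (iii) of Proposition 2: under these conditions the channel Φ(κ₁,μ₁)⊗Φ(κ₂,μ₂) with two amplifiers is not entanglement annihilating.) -/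
/-- Case (iii) of Proposition 2 (two amplifiers): algebraic reduction of the
entanglement-preservation conditions. -/
theorem prop2_case_iii (κ₁ κ₂ a₁ a₂ : ℝ)
    (hκ₁ : 1 ≤ κ₁) (hκ₂ : 1 ≤ κ₂) (ha₁ : 0 ≤ a₁) (ha₂ : 0 ≤ a₂) :
    (0 < 2 - κ₁ / (κ₁ + a₁) - (κ₂ + a₂) * (2 - κ₁ / (κ₁ + a₁) - κ₂ / (κ₂ + a₂)) ∧
     0 < 2 - κ₂ / (κ₂ + a₂) - (κ₁ + a₁) * (2 - κ₁ / (κ₁ + a₁) - κ₂ / (κ₂ + a₂))) ↔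
    (a₁ < 1 - κ₁ * a₂ / (κ₂ + 2 * a₂) ∧
     a₂ < 1 - κ₂ * a₁ / (κ₁ + 2 * a₁)) := by
  have ht1 : (0:ℝ) < κ₁ + a₁ := by linarith
  have ht2 : (0:ℝ) < κ₂ + a₂ := by linarith
  have hd1 : (0:ℝ) < κ₂ + 2 * a₂ := by linarith
  have hd2 : (0:ℝ) < κ₁ + 2 * a₁ := by linarith
  set Q₁ : ℝ := κ₁ + 2 * a₁ - κ₁ * a₂ - κ₂ * a₁ - 2 * a₁ * a₂ with hQ₁
  set Q₂ : ℝ := κ₂ + 2 * a₂ - κ₂ * a₁ - κ₁ * a₂ - 2 * a₁ * a₂ with hQ₂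
  have e1 : 2 - κ₁ / (κ₁ + a₁) - (κ₂ + a₂) * (2 - κ₁ / (κ₁ + a₁) - κ₂ / (κ₂ + a₂))
      = Q₁ / (κ₁ + a₁) := by
    field_simp
    ring
  have e2 : 2 - κ₂ / (κ₂ + a₂) - (κ₁ + a₁) * (2 - κ₁ / (κ₁ + a₁) - κ₂ / (κ₂ + a₂))
      = Q₂ / (κ₂ + a₂) := by
    field_simp
    ring
  have e3 : (1:ℝ) - κ₁ * a₂ / (κ₂ + 2 * a₂) - a₁ = Q₂ / (κ₂ + 2 * a₂) := by
    field_simp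
    ring
  have e4 : (1:ℝ) - κ₂ * a₁ / (κ₁ + 2 * a₁) - a₂ = Q₁ / (κ₁ + 2 * a₁) := by
    field_simp
    ring
  have h3 : (a₁ < 1 - κ₁ * a₂ / (κ₂ + 2 * a₂)) ↔ 0 < Q₂ := by
    rw [← sub_pos, e3, lt_div_iff₀ hd1, zero_mul]
  have h4 : (a₂ < 1 - κ₂ * a₁ / (κ₁ + 2 * a₁)) ↔ 0 < Q₁ := by
    rw [← sub_pos, e4, lt_div_iff₀ hd2, zero_mul]
  rw [e1, e2, h3, h4, lt_div_iff₀ ht1, lt_div_iff₀ ht2, zero_mul, zero_mul, and_comm]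
end
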